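/- arXiv:2205.04456 — 3 statements merged into one kernel-verified Lean document; each statement's English description precedes it below -/
import Mathlib

section
/- Let K/k be a finite extension of fields of odd degree (the dimension of K as a k-vector space is odd). If an element a ∈ k becomes a square in K (there exists b ∈ K with b² equal to the image of a), then a is already a square in k (there exists c ∈ k with c² = a). -/
/-! The minimal polynomial of a square root `b ∈ K` of `a ∈ k` divides `X ^ 2 - a`, so its degree is
at most `2`; that degree also divides `[K : k]`, hence is odd. So it is `1`, i.e. `b` lies in `k`. -/

open Polynomial

theorem minpoly_natDegree_le_two_of_sq_eq_algebraMap {A B : Type*} [CommRing A] [Nontrivial A]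
    [Ring B] [Algebra A B] {a : A} {b : B} (hb : b ^ 2 = algebraMap A B a) :
    (minpoly A b).natDegree ≤ 2 := by
  have hroot : aeval b (X ^ 2 - C a) = 0 := by simp [hb]
  have hdeg := minpoly.min A b (monic_X_pow_sub_C a two_ne_zero) hroot
  rw [degree_X_pow_sub_C two_pos] at hdeg
  exact natDegree_le_of_degree_le hdeg

theorem odd_minpoly_natDegree_of_odd_finrank {k K : Type*} [Field k] [Field K] [Algebra k K]
    [FiniteDimensional k K] (hodd : Odd (Module.finrank k K)) (x : K) :
    Odd (minpoly k x).natDegree :=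
  hodd.of_dvd_nat (minpoly.degree_dvd (IsIntegral.of_finite k x))

theorem mem_range_algebraMap_of_sq_eq_algebraMap_of_odd_finrank {k K : Type*} [Field k] [Field K]
    [Algebra k K] [FiniteDimensional k K] (hodd : Odd (Module.finrank k K)) {a : k} {b : K}
    (hb : b ^ 2 = algebraMap k K a) : b ∈ (algebraMap k K).range := by
  have hle := minpoly_natDegree_le_two_of_sq_eq_algebraMap hb
  obtain ⟨m, hm⟩ := odd_minpoly_natDegree_of_odd_finrank hodd b
  have hone : (minpoly k b).natDegree = 1 := by omega
  exact minpoly.natDegree_eq_one_iff.mp hone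

/-- Let `K/k` be a finite field extension of odd degree. If `a ∈ k` becomes a
square in `K`, then `a` is already a square in `k`. -/
theorem isSquare_of_isSquare_odd_degree_extension
    {k K : Type*} [Field k] [Field K] [Algebra k K] [FiniteDimensional k K]
    (hodd : Odd (Module.finrank k K))
    (a : k) (b : K) (hb : b ^ 2 = algebraMap k K a) :
    ∃ c : k, c ^ 2 = a := by
  obtain ⟨c, rfl⟩ := mem_range_algebraMap_of_sq_eq_algebraMap_of_odd_finrank hodd hb
  exact ⟨c, (algebraMap k K).injective (by rw [map_pow, hb])⟩
end

section
/- Let k and K be finite fields of odd characteristic, with K a k-algebra such that the degree [K : k] is odd. Then every nonzero element a of K can be written as a = φ(α)·β², where φ : k → K is the algebra map, α is a nonzero element of k, and β is a nonzero element of K. In other words, every element of Kˣ is, up to a square in Kˣ, the image of an element of kˣ. -/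
/-- Let `k ⊆ K` be finite fields of odd characteristic with `[K : k]` odd. Then
every nonzero `a ∈ K` can be written as `a = φ(α) β²` with `α ∈ kˣ`, `β ∈ Kˣ`,
where `φ : k → K` is the algebra map. -/
theorem eq_algebraMap_mul_sq_of_odd_degree
    {k K : Type*} [Field k] [Field K] [Algebra k K] [Fintype k] [Fintype K]
    (hchar : ringChar k ≠ 2) (hodd : Odd (Module.finrank k K))
    (a : K) (ha : a ≠ 0) :
    ∃ (α : k) (β : K), α ≠ 0 ∧ β ≠ 0 ∧ a = algebraMap k K α * β ^ 2 := by
  have hKchar : ringChar K ≠ 2 := by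
    have : CharP K (ringChar k) :=
      charP_of_injective_algebraMap (algebraMap k K).injective (ringChar k)
    rw [ringChar.eq K (ringChar k)]; exact hchar
  by_cases hs : IsSquare a
  · obtain ⟨c, rfl⟩ := hs
    have hc : c ≠ 0 := by rintro rfl; simp at ha
    exact ⟨1, c, one_ne_zero, hc, by rw [map_one, one_mul, sq]⟩
  · obtain ⟨ε, hε⟩ := FiniteField.exists_nonsquare (F := k) hchar
    have hε0 : ε ≠ 0 := by rintro rfl; exact hε ⟨0, by simp⟩
    set b : K := algebraMap k K ε with hb
    have hb0 : b ≠ 0 := by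
      simpa [hb] using (map_ne_zero (algebraMap k K)).mpr hε0
    -- b is not a square in K
    have hbs : ¬ IsSquare b := by
      rintro ⟨c, hc⟩
      obtain ⟨m, hm⟩ := hodd
      have hnorm : Algebra.norm k b = ε ^ Module.finrank k K := Algebra.norm_algebraMap ε
      have : IsSquare (ε ^ Module.finrank k K) := by
        rw [← hnorm, hc, ← sq]
        exact ⟨Algebra.norm k c, by rw [← sq, map_pow]⟩
      rw [hm, pow_add, pow_mul, pow_one] at this
      obtain ⟨s, hsq⟩ := this
      apply hε
      refine ⟨s / ε ^ m, ?_⟩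
      have hεm : (ε ^ m : k) ≠ 0 := pow_ne_zero _ hε0
      field_simp
      rw [sq s, ← hsq]; ring
    -- a / b is a square in K
    have key : IsSquare (a / b) := by
      rw [FiniteField.isSquare_iff hKchar (div_ne_zero ha hb0), div_pow]
      rcases FiniteField.pow_dichotomy hKchar ha with h1 | h1
      · exact absurd ((FiniteField.isSquare_iff hKchar ha).mpr h1) hs
      rcases FiniteField.pow_dichotomy hKchar hb0 with h2 | h2
      · exact absurd ((FiniteField.isSquare_iff hKchar hb0).mpr h2) hbs
      rw [h1, h2]; simp
    obtain ⟨β, hβ⟩ := key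
    have hβ0 : β ≠ 0 := by
      rintro rfl
      rw [mul_zero] at hβ
      exact (div_ne_zero ha hb0) hβ
    exact ⟨ε, β, hε0, hβ0, by rw [← hb, sq, ← hβ, mul_div_cancel₀ a hb0]⟩
end

section
/- Let k and K be finite fields of odd characteristic, with K a k-algebra such that the degree [K : k] is odd. Then every nondegenerate quadratic form Q on a finite-dimensional K-vector space W is equivalent over K to the base change of a nondegenerate quadratic form defined over k: there exist a finite-dimensional k-vector space V and a nondegenerate quadratic form Q₀ on V such that Q is equivalent to Q₀ ⊗ K on K ⊗_k V. -/
open QuadraticMap Finset TensorProduct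

private lemma aux_geom {q d : ℕ} (hq : q % 2 = 1) (hd : Odd d) :
    ∃ S : ℕ, Odd S ∧ q ^ d / 2 = q / 2 * S := by
  refine ⟨∑ i ∈ Finset.range d, q ^ i, ?_, ?_⟩
  · rw [Nat.odd_iff]
    have h2 : ((∑ i ∈ Finset.range d, q ^ i : ℕ) : ZMod 2) = 1 := by
      push_cast
      have hq2 : (q : ZMod 2) = 1 := by
        rw [← ZMod.natCast_mod, hq, Nat.cast_one]
      simp [hq2, Nat.odd_iff.mp hd, ← ZMod.natCast_mod d 2]
    rcases Nat.mod_two_eq_zero_or_one (∑ i ∈ Finset.range d, q ^ i) with h | h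
    · exfalso
      rw [← ZMod.natCast_mod, h] at h2
      simp at h2
    · exact h
  · have hq1 : 1 ≤ q := by omega
    have hqd : q ^ d % 2 = 1 := Nat.odd_iff.mp ((Nat.odd_iff.mpr hq).pow)
    have key : (q - 1) * (∑ i ∈ Finset.range d, q ^ i) = q ^ d - 1 := by
      have h1d : 1 ≤ q ^ d := Nat.one_le_pow _ _ (by omega)
      zify [hq1, h1d]
      rw [mul_comm]
      exact geom_sum_mul (q : ℤ) d
    have e1 : 2 * (q ^ d / 2) = q ^ d - 1 := Nat.two_mul_odd_div_two hqd
    have e2 : 2 * (q / 2) = q - 1 := Nat.two_mul_odd_div_two hq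
    have : 2 * (q ^ d / 2) = 2 * (q / 2 * (∑ i ∈ Finset.range d, q ^ i)) := by
      rw [e1, ← mul_assoc, e2, key]
    omega

section AuxField
variable {k K : Type*} [Field k] [Field K] [Algebra k K] [Fintype k] [Fintype K]

private lemma aux_nonsquare (hk2 : ringChar k ≠ 2) (hK2 : ringChar K ≠ 2)
    (hodd : Odd (Module.finrank k K)) {a : k} (ha : ¬ IsSquare a) :
    ¬ IsSquare (algebraMap k K a) := by
  have h0 : a ≠ 0 := fun h => ha ⟨0, by simp [h]⟩
  have hb0 : algebraMap k K a ≠ 0 := fun h => h0 ((algebraMap k K).injective (by simp [h]))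
  have hpd := (FiniteField.pow_dichotomy hk2 h0).resolve_left
    (fun h => ha ((FiniteField.isSquare_iff hk2 h0).2 h))
  obtain ⟨S, hS, hQ2⟩ := aux_geom (FiniteField.odd_card_of_char_ne_two hk2) hodd
  intro hsq
  have h1 := (FiniteField.isSquare_iff hK2 hb0).1 hsq
  rw [Module.card_eq_pow_finrank (K := k) (V := K), hQ2, pow_mul, ← map_pow, hpd, _root_.map_neg,
    map_one, hS.neg_one_pow] at h1
  exact Ring.neg_one_ne_one_of_char_ne_two hK2 h1

private lemma aux_descend (hk2 : ringChar k ≠ 2) (hK2 : ringChar K ≠ 2)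
    (hodd : Odd (Module.finrank k K)) (c : Kˣ) :
    ∃ (u : kˣ) (t : Kˣ), (c : K) = algebraMap k K u * (t : K) ^ 2 := by
  classical
  by_cases h : IsSquare (c : K)
  · obtain ⟨r, hr⟩ := h
    have hr0 : r ≠ 0 := by rintro rfl; exact c.ne_zero (by rw [zero_mul] at hr; exact hr)
    exact ⟨1, Units.mk0 r hr0, by simp [hr, _root_.sq]⟩
  · obtain ⟨a, ha⟩ := FiniteField.exists_nonsquare hk2
    have ha0 : a ≠ 0 := fun h' => ha ⟨0, by simp [h']⟩
    have hb := aux_nonsquare hk2 hK2 hodd ha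
    have hb0 : algebraMap k K a ≠ 0 := fun h' => ha0 ((algebraMap k K).injective (by simp [h']))
    have hcb0 : (c : K) * algebraMap k K a ≠ 0 := mul_ne_zero c.ne_zero hb0
    have hsq : IsSquare ((c : K) * algebraMap k K a) := by
      rw [← quadraticChar_one_iff_isSquare hcb0, map_mul,
        quadraticChar_neg_one_iff_not_isSquare.2 h,
        quadraticChar_neg_one_iff_not_isSquare.2 hb]
      norm_num
    obtain ⟨s, hs⟩ := hsq
    have hs0 : s ≠ 0 := by
      rintro rfl
      rw [mul_zero] at hs
      exact hcb0 hs
    refine ⟨(Units.mk0 a ha0)⁻¹, Units.mk0 s hs0, ?_⟩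
    have : (c : K) = s * s * (algebraMap k K a)⁻¹ := by
      field_simp [hs]
      rw [hs, _root_.sq]
    rw [this]
    simp [map_inv₀, _root_.sq]
    ring

end AuxField

private lemma aux_sep {k : Type*} [Field k] [Invertible (2 : k)] {ι : Type*} [Fintype ι]
    [DecidableEq ι] (u : ι → kˣ) :
    (QuadraticMap.weightedSumSquares k u).polarBilin.SeparatingLeft := by
  intro x hx
  ext j
  have h := hx (Pi.single j 1)
  rw [QuadraticMap.polarBilin_apply_apply, QuadraticMap.polar,
    QuadraticMap.weightedSumSquares_apply, QuadraticMap.weightedSumSquares_apply,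
    QuadraticMap.weightedSumSquares_apply, ← Finset.sum_sub_distrib, ← Finset.sum_sub_distrib,
    Finset.sum_eq_single j] at h
  · simp only [Pi.add_apply, Pi.single_eq_same, Units.smul_def, smul_eq_mul] at h
    have h2 : (u j : k) * (2 * x j) = 0 := by rw [← h]; ring
    have hu : (u j : k) ≠ 0 := (u j).ne_zero
    have h2' : (2 : k) ≠ 0 := Invertible.ne_zero 2
    simpa [hu, h2'] using h2
  · intro i _ hij
    simp [Pi.single_eq_of_ne hij]
  · intro hj; exact absurd (Finset.mem_univ j) hj

private lemma aux_scale {K : Type*} [Field K] {ι : Type*} [Fintype ι] [DecidableEq ι]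
    (c : ι → K) (t : ι → Kˣ) :
    (QuadraticMap.weightedSumSquares K fun i => c i * (t i : K) ^ 2).Equivalent
      (QuadraticMap.weightedSumSquares K c) := by
  have heq : (QuadraticMap.weightedSumSquares K c).basisRepr ((Pi.basisFun K ι).unitsSMul t)
      = QuadraticMap.weightedSumSquares K fun i => c i * (t i : K) ^ 2 := by
    ext v
    rw [QuadraticMap.basisRepr_apply, QuadraticMap.weightedSumSquares_apply,
      QuadraticMap.weightedSumSquares_apply]
    refine Finset.sum_congr rfl fun j _ => ?_
    have hsum : (∑ i, v i • ((Pi.basisFun K ι).unitsSMul t) i) j = v j * (t j : K) := by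
      simp [Module.Basis.unitsSMul_apply, Pi.single_apply, Units.smul_def, smul_eq_mul, mul_comm]
    rw [hsum]
    simp only [smul_eq_mul]
    ring
  exact QuadraticMap.Equivalent.symm ⟨heq ▸ QuadraticMap.isometryEquivBasisRepr
    (QuadraticMap.weightedSumSquares K c) ((Pi.basisFun K ι).unitsSMul t)⟩

private lemma aux_baseChange {k K : Type*} [Field k] [Field K] [Algebra k K] [Invertible (2 : k)]
    {ι : Type*} [Fintype ι] [DecidableEq ι] {V : Type} [AddCommGroup V] [Module k V]
    (e : (ι → k) ≃ₗ[k] V) (u : ι → kˣ) :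
    (QuadraticMap.weightedSumSquares K fun i => algebraMap k K (u i)).Equivalent
      (QuadraticForm.baseChange K ((QuadraticMap.weightedSumSquares k u).comp
        (e.symm : V →ₗ[k] (ι → k)))) := by
  classical
  let f : (K ⊗[k] V) ≃ₗ[K] (ι → K) :=
    (LinearEquiv.baseChange k K V (ι → k) e.symm).trans (TensorProduct.piScalarRight k K K ι)
  have key : (QuadraticMap.weightedSumSquares K fun i => algebraMap k K (u i)).comp
      (f : (K ⊗[k] V) →ₗ[K] (ι → K))
      = QuadraticForm.baseChange K ((QuadraticMap.weightedSumSquares k u).comp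
        (e.symm : V →ₗ[k] (ι → k))) := by
    apply baseChange_ext
    intro m
    rw [QuadraticForm.baseChange_tmul]
    simp only [QuadraticMap.comp_apply, LinearEquiv.coe_coe]
    have hf : f (1 ⊗ₜ m) = fun j => algebraMap k K (e.symm m j) := by
      ext j
      simp [f, LinearEquiv.baseChange, Algebra.smul_def]
    rw [hf, QuadraticMap.weightedSumSquares_apply, QuadraticMap.weightedSumSquares_apply,
      mul_one, Algebra.smul_def, map_sum, Finset.sum_mul]
    refine Finset.sum_congr rfl fun i _ => ?_
    simp only [Units.smul_def, Algebra.smul_def, map_mul, Algebra.algebraMap_self_apply]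
    ring
  exact ⟨key ▸ QuadraticMap.isometryEquivOfCompLinearEquiv
    (QuadraticMap.weightedSumSquares K fun i => algebraMap k K (u i)) f⟩

/-- Let `k ⊆ K` be finite fields of odd characteristic with `[K : k]` odd. Then
every nondegenerate quadratic form over `K` is equivalent to the base change of
a nondegenerate quadratic form defined over `k`. -/
theorem quadraticForm_descends_of_odd_degree
    {k K : Type*} [Field k] [Field K] [Algebra k K] [Fintype k] [Fintype K]
    [Invertible (2 : k)] (hodd : Odd (Module.finrank k K))
    {W : Type*} [AddCommGroup W] [Module K W] [FiniteDimensional K W]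
    (Q : QuadraticForm K W) (hQ : Q.polarBilin.SeparatingLeft) :
    ∃ (V : Type) (_ : AddCommGroup V) (_ : Module k V)
      (_ : FiniteDimensional k V) (Q₀ : QuadraticForm k V),
      Q₀.polarBilin.SeparatingLeft ∧ Q.Equivalent (Q₀.baseChange K) := by
  classical
  letI : Invertible (2 : K) := (Invertible.map (algebraMap k K) 2).copy 2 (map_ofNat _ _).symm
  have hk2 : ringChar k ≠ 2 := by
    intro h
    have h2 : ((2 : ℕ) : k) = 0 := by rw [← h]; exact ringChar.Nat.cast_ringChar
    exact Invertible.ne_zero (2 : k) (by exact_mod_cast h2)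
  have hK2 : ringChar K ≠ 2 := by
    intro h
    have h2 : ((2 : ℕ) : K) = 0 := by rw [← h]; exact ringChar.Nat.cast_ringChar
    exact Invertible.ne_zero (2 : K) (by exact_mod_cast h2)
  have hQ' : (QuadraticMap.associated (R := K) Q).SeparatingLeft := by
    intro x hx
    refine hQ x fun y => ?_
    have key := LinearMap.congr_fun
      (LinearMap.congr_fun (QuadraticMap.two_nsmul_associated K Q) x) y
    rw [← key, LinearMap.smul_apply, LinearMap.smul_apply, hx y, smul_zero]
  set n := Module.finrank K W with hn
  obtain ⟨w, hw⟩ := Q.equivalent_weightedSumSquares_units_of_nondegenerate' hQ'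
  choose u t hu using fun i => aux_descend hk2 hK2 hodd (w i)
  let e : (Fin n → k) ≃ₗ[k] Shrink.{0} (Fin n → k) := (Shrink.linearEquiv.{0} k (Fin n → k)).symm
  haveI : FiniteDimensional k (Shrink.{0} (Fin n → k)) := Module.Finite.equiv e
  refine ⟨Shrink.{0} (Fin n → k), inferInstance, inferInstance, inferInstance,
    (QuadraticMap.weightedSumSquares k u).comp
      (e.symm : Shrink.{0} (Fin n → k) →ₗ[k] (Fin n → k)), ?_, ?_⟩
  · intro x hx
    refine (LinearEquiv.map_eq_zero_iff e.symm).mp (aux_sep u (e.symm x) fun y => ?_)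
    have h := hx (e y)
    simpa [QuadraticMap.polarBilin_apply_apply, QuadraticMap.polar, QuadraticMap.comp_apply,
      map_add] using h
  · have hwc : QuadraticMap.weightedSumSquares K w
        = QuadraticMap.weightedSumSquares K fun i => algebraMap k K (u i) * (t i : K) ^ 2 := by
      ext v
      rw [QuadraticMap.weightedSumSquares_apply, QuadraticMap.weightedSumSquares_apply]
      exact Finset.sum_congr rfl fun i _ => by
        rw [Units.smul_def, smul_eq_mul, smul_eq_mul, ← hu i]
    refine hw.trans ?_
    rw [hwc]
    exact ((aux_scale _ t).trans (aux_baseChange e u))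
end
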